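/- arXiv:1106.6317 — 6 statements merged into one kernel-verified Lean document; each statement's English description precedes it below -/
import Mathlib

section
/- Let (V,g) be a Lorentz vector space and F : V⁴ → ℝ a curvature-like map. If F(x,y,y,x) = 0 for every degenerate 2-plane span{x,y} in V, then there is a constant k with F(x,y,z,w) = k (g(x,z)g(y,w) - g(y,z)g(x,w)) for all x,y,z,w. -/
/-! A curvature-like tensor is determined by its sectional form `F x y y x`, so it suffices to
show that this form is `k` times the (negated) Gram determinant of the Minkowski form. Write
vectors as `t • (1, 0) + (0, a)`. For `e ⊥ a` the null vectors `(±‖e‖, e)` span degenerate planes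
with `(0, a)`; the two resulting relations make the mixed components
`F (1, 0) (0, a) (0, b) (0, c)` vanish and give
`F (0, e) (0, a) (0, a) (0, e) = -‖e‖² F (1, 0) (0, a) (0, a) (1, 0)`. Pair symmetry of the left
side then forces `F (1, 0) (0, a) (0, b) (1, 0) = k ⟪a, b⟫`, and every other sectional value is
reduced to these by shearing the plane. -/

open RealInnerProductSpace

structure IsCurvatureLike {M R : Type*} [AddCommGroup R] (T : M → M → M → M → R) : Prop where
  antisymm : ∀ x y z w, T y x z w = -T x y z w
  pair_symm : ∀ x y z w, T z w x y = T x y z w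
  bianchi : ∀ x y z w, T x y z w + T x z w y + T x w y z = 0

namespace IsCurvatureLike

section AddCommGroup

variable {M R : Type*} [AddCommGroup R] {T S : M → M → M → M → R}

theorem antisymm_right (hT : IsCurvatureLike T) (x y z w : M) : T x y w z = -T x y z w := by
  rw [← hT.pair_symm, hT.antisymm, hT.pair_symm]

theorem sub (hT : IsCurvatureLike T) (hS : IsCurvatureLike S) :
    IsCurvatureLike fun x y z w => T x y z w - S x y z w where
  antisymm x y z w := by rw [hT.antisymm, hS.antisymm]; abel
  pair_symm x y z w := by rw [hT.pair_symm, hS.pair_symm]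
  bianchi x y z w := by
    calc _ = (T x y z w + T x z w y + T x w y z) - (S x y z w + S x z w y + S x w y z) := by abel
      _ = 0 := by rw [hT.bianchi, hS.bianchi, sub_zero]

theorem apply_rev (hT : IsCurvatureLike T) (x y z w : M) : T w z y x = T x y z w := by
  rw [hT.pair_symm, hT.antisymm, hT.antisymm_right, neg_neg]

variable [IsAddTorsionFree R]

theorem apply_self_left (hT : IsCurvatureLike T) (x z w : M) : T x x z w = 0 :=
  self_eq_neg.1 (hT.antisymm x x z w)

theorem apply_self_right (hT : IsCurvatureLike T) (x y z : M) : T x y z z = 0 :=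
  self_eq_neg.1 (hT.antisymm_right x y z z)

theorem eq_zero_of_sectional_eq_zero [AddCommGroup M] (hT : IsCurvatureLike T)
    (hadd : ∀ x x' y z w, T (x + x') y z w = T x y z w + T x' y z w)
    (hsec : ∀ x y, T x y y x = 0) (x y z w : M) : T x y z w = 0 := by
  have hadd₂ : ∀ x y y' z w, T x (y + y') z w = T x y z w + T x y' z w := fun x y y' z w => by
    rw [hT.antisymm, hadd, hT.antisymm y, hT.antisymm y', neg_add]
  have hadd₃ : ∀ x y z z' w, T x y (z + z') w = T x y z w + T x y z' w := fun x y z z' w => by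
    rw [← hT.pair_symm x y (z + z') w, hadd, hT.pair_symm x y z w, hT.pair_symm x y z' w]
  have hadd₄ : ∀ x y z w w', T x y z (w + w') = T x y z w + T x y z w' := fun x y z w w' => by
    rw [← hT.pair_symm x y z (w + w'), hadd₂, hT.pair_symm x y z w, hT.pair_symm x y z w']
  -- polarizing the sectional form in its outer and then in its inner slots
  have hxyyz : ∀ x y z, T x y y z = 0 := fun x y z => by
    have h := hsec (x + z) y
    rw [hadd, hadd₄, hadd₄, hsec, hsec, hT.pair_symm y x z y, hT.antisymm x y,
      hT.antisymm_right x y y z, neg_neg, zero_add, add_zero] at h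
    exact self_eq_neg.1 (eq_neg_of_add_eq_zero_left h)
  have hswap : ∀ x y z w, T x z y w = -T x y z w := fun x y z w => by
    have h := hxyyz x (y + z) w
    rw [hadd₂, hadd₃, hadd₃, hxyyz, hxyyz, zero_add, add_zero] at h
    exact eq_neg_of_add_eq_zero_right h
  have h := hT.bianchi x y z w
  rw [hT.antisymm_right x z y w, hswap x y z w, neg_neg, hswap x y w z, hT.antisymm_right x y z w,
    neg_neg] at h
  have h3 : 3 • T x y z w = 0 := by rw [succ_nsmul, two_nsmul, h]
  exact (nsmul_eq_zero_iff_right three_ne_zero).1 h3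

end AddCommGroup

section CommRing

variable {M R : Type*} [CommRing R] {T : M → M → M → M → R}

theorem const_mul (hT : IsCurvatureLike T) (c : R) :
    IsCurvatureLike fun x y z w => c * T x y z w where
  antisymm x y z w := by rw [hT.antisymm, mul_neg]
  pair_symm x y z w := by rw [hT.pair_symm]
  bianchi x y z w := by rw [← mul_add, ← mul_add, hT.bianchi, mul_zero]

end CommRing

section Module

variable {M R : Type*} [CommRing R] [AddCommGroup M] [Module R M]
  {F : M →ₗ[R] M →ₗ[R] M →ₗ[R] M →ₗ[R] R}

theorem sectional_add_left (hF : IsCurvatureLike (F · · · ·)) (x x' y : M) :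
    F (x + x') y y (x + x') = F x y y x + 2 * F x y y x' + F x' y y x' := by
  simp only [map_add, LinearMap.add_apply]
  rw [hF.apply_rev x' y y x]
  ring

variable [IsAddTorsionFree R] in
theorem sectional_add_smul_right (hF : IsCurvatureLike (F · · · ·)) (x y : M) (c : R) :
    F x (y + c • x) (y + c • x) x = F x y y x := by
  simp only [map_add, map_smul, LinearMap.add_apply, LinearMap.smul_apply, smul_eq_mul,
    hF.apply_self_left, hF.apply_self_right]
  ring

end Module

end IsCurvatureLike

theorem isCurvatureLike_gram {M R : Type*} [CommRing R] (b : M → M → R)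
    (hb : ∀ x y, b x y = b y x) :
    IsCurvatureLike fun x y z w => b x z * b y w - b y z * b x w where
  antisymm x y z w := by ring
  pair_symm x y z w := by rw [hb z x, hb w y, hb w x, hb z y]; ring
  bianchi x y z w := by rw [hb z y, hb w z, hb w y]; ring

section InnerProductSpace

variable {E : Type*} [NormedAddCommGroup E] [InnerProductSpace ℝ E]

theorem exists_eq_smul_add_orthogonal (a e : E) :
    ∃ (t : ℝ) (e' : E), ⟪a, e'⟫ = 0 ∧ e = t • a + e' := by
  obtain ⟨y, hy, e', he', rfl⟩ := (ℝ ∙ a).exists_add_mem_mem_orthogonal e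
  obtain ⟨t, rfl⟩ := Submodule.mem_span_singleton.1 hy
  exact ⟨t, e', Submodule.mem_orthogonal_singleton_iff_inner_right.1 he', rfl⟩

theorem LinearMap.eq_zero_of_cyclic_of_apply_self_orthogonal (C : E →ₗ[ℝ] E →ₗ[ℝ] E →ₗ[ℝ] ℝ)
    (hanti : ∀ a b c, C a c b = -C a b c) (hcyc : ∀ a b c, C a b c + C b c a + C c a b = 0)
    (horth : ∀ a e, ⟪a, e⟫ = 0 → C a a e = 0) (a b c : E) : C a b c = 0 := by
  have hdiag : ∀ a e, C a a e = 0 := fun a e => by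
    obtain ⟨t, e', he', rfl⟩ := exists_eq_smul_add_orthogonal a e
    rw [map_add, map_smul, horth a e' he', self_eq_neg.1 (hanti a a a), smul_zero, add_zero]
  have hswap : ∀ a b c, C b a c = -C a b c := fun a b c => by
    have h := hdiag (a + b) c
    simp only [map_add, LinearMap.add_apply, hdiag] at h
    linear_combination h
  linear_combination
    (hcyc a b c - hswap c b a + hanti c a b - 2 * hswap a c b + 2 * hanti a b c) / 3

theorem LinearMap.eq_smul_inner_of_apply_self (B : E →ₗ[ℝ] E →ₗ[ℝ] ℝ)
    (hB : ∀ a b, B a b = B b a) {k : ℝ} (h : ∀ x, B x x = k * ⟪x, x⟫) (a b : E) :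
    B a b = k * ⟪a, b⟫ := by
  have hab := h (a + b)
  simp only [map_add, LinearMap.add_apply, inner_add_left, inner_add_right, h, hB b a,
    real_inner_comm a b] at hab
  linear_combination hab / 2

theorem LinearMap.exists_eq_smul_inner_of_orthogonal (B : E →ₗ[ℝ] E →ₗ[ℝ] ℝ)
    (hB : ∀ a b, B a b = B b a) (h : ∀ x e, ⟪e, x⟫ = 0 → B x x * ⟪e, e⟫ = B e e * ⟪x, x⟫) :
    ∃ k : ℝ, ∀ a b, B a b = k * ⟪a, b⟫ := by
  suffices ∃ k : ℝ, ∀ x, B x x = k * ⟪x, x⟫ from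
    this.imp fun k hk => B.eq_smul_inner_of_apply_self hB hk
  rcases subsingleton_or_nontrivial E with hE | hE
  · exact ⟨0, fun x => by simp [Subsingleton.elim x 0]⟩
  obtain ⟨e, he⟩ := exists_norm_eq E zero_le_one
  have hee : ⟪e, e⟫ = 1 := by rw [real_inner_self_eq_norm_sq, he, one_pow]
  refine ⟨B e e, fun x => ?_⟩
  obtain ⟨t, y, hy, rfl⟩ := exists_eq_smul_add_orthogonal e x
  have hyy : B y y = B e e * ⟪y, y⟫ := by simpa only [hee, mul_one] using h y e hy
  have hey : B e y = 0 := by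
    rcases eq_or_ne y 0 with rfl | hy0
    · simp
    have hyy' : ⟪y, y⟫ = ‖y‖ ^ 2 := real_inner_self_eq_norm_sq y
    have h' := h (‖y‖ • e + y) (‖y‖ • e - y) (by
      simp only [inner_add_right, inner_sub_left, real_inner_smul_left, real_inner_smul_right,
        hee, hy, real_inner_comm e y, hyy']
      ring)
    simp only [map_add, map_sub, map_smul, LinearMap.add_apply, LinearMap.sub_apply,
      LinearMap.smul_apply, smul_eq_mul, inner_add_right, inner_sub_left, inner_add_left,
      inner_sub_right, real_inner_smul_left, real_inner_smul_right, hee, hy,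
      real_inner_comm e y, hyy', hB y e] at h'
    have hpos : 0 < ‖y‖ := norm_pos_iff.2 hy0
    have : 8 * ‖y‖ ^ 3 * B e y = 0 := by linear_combination h'
    simpa [hpos.ne'] using this
  simp only [map_add, map_smul, LinearMap.add_apply, LinearMap.smul_apply, smul_eq_mul,
    inner_add_left, inner_add_right, real_inner_smul_left, real_inner_smul_right, hee, hy,
    real_inner_comm e y, hyy, hey, hB y e]
  ring

end InnerProductSpace

section Minkowski

variable {E : Type*} [NormedAddCommGroup E] [InnerProductSpace ℝ E]

def minkowski (v w : ℝ × E) : ℝ := -(v.1 * w.1) + ⟪v.2, w.2⟫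

theorem minkowski_comm (v w : ℝ × E) : minkowski v w = minkowski w v := by
  rw [minkowski, minkowski, mul_comm, real_inner_comm]

theorem minkowski_add_left (v v' w : ℝ × E) :
    minkowski (v + v') w = minkowski v w + minkowski v' w := by
  simp only [minkowski, Prod.fst_add, Prod.snd_add, inner_add_left]
  ring

theorem minkowski_gram_add_smul_right (x y : ℝ × E) (c : ℝ) :
    minkowski x (y + c • x) ^ 2 - minkowski x x * minkowski (y + c • x) (y + c • x) =
      minkowski x y ^ 2 - minkowski x x * minkowski y y := by
  simp only [minkowski, Prod.fst_add, Prod.snd_add, Prod.smul_fst, Prod.smul_snd, smul_eq_mul,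
    inner_add_left, inner_add_right, real_inner_smul_left, real_inner_smul_right,
    real_inner_comm x.2 y.2]
  ring

namespace IsCurvatureLike

variable {F : ℝ × E →ₗ[ℝ] ℝ × E →ₗ[ℝ] ℝ × E →ₗ[ℝ] ℝ × E →ₗ[ℝ] ℝ}

theorem sectional_null_expansion (hF : IsCurvatureLike (F · · · ·))
    (hdeg : ∀ x y, minkowski x x * minkowski y y - minkowski x y ^ 2 = 0 → F x y y x = 0)
    {s : ℝ} {e a : E} (hs : s ^ 2 = ⟪e, e⟫) (hea : ⟪e, a⟫ = 0) :
    s ^ 2 * F (1, 0) (0, a) (0, a) (1, 0) + 2 * s * F (1, 0) (0, a) (0, a) (0, e) +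
      F (0, e) (0, a) (0, a) (0, e) = 0 := by
  have hnull : F (s, e) (0, a) (0, a) (s, e) = 0 :=
    hdeg _ _ (by simp only [minkowski, hea, ← hs]; ring)
  rw [show ((s, e) : ℝ × E) = s • (1, 0) + (0, e) by simp, hF.sectional_add_left] at hnull
  simp only [map_smul, LinearMap.smul_apply, smul_eq_mul] at hnull
  linear_combination hnull

theorem apply_time_space_space_orthogonal_eq_zero (hF : IsCurvatureLike (F · · · ·))
    (hdeg : ∀ x y, minkowski x x * minkowski y y - minkowski x y ^ 2 = 0 → F x y y x = 0)
    {e a : E} (hea : ⟪e, a⟫ = 0) : F (1, 0) (0, a) (0, a) (0, e) = 0 := by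
  rcases eq_or_ne e 0 with rfl | he
  · rw [Prod.mk_zero_zero, map_zero]
  have hs : ‖e‖ ^ 2 = ⟪e, e⟫ := (real_inner_self_eq_norm_sq e).symm
  have hplus := hF.sectional_null_expansion hdeg hs hea
  have hminus := hF.sectional_null_expansion hdeg ((neg_sq ‖e‖).trans hs) hea
  have h : 4 * ‖e‖ * F (1, 0) (0, a) (0, a) (0, e) = 0 := by linear_combination hplus - hminus
  simpa [he] using h

theorem sectional_space_orthogonal (hF : IsCurvatureLike (F · · · ·))
    (hdeg : ∀ x y, minkowski x x * minkowski y y - minkowski x y ^ 2 = 0 → F x y y x = 0)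
    {e a : E} (hea : ⟪e, a⟫ = 0) :
    F (0, e) (0, a) (0, a) (0, e) = -(⟪e, e⟫ * F (1, 0) (0, a) (0, a) (1, 0)) := by
  linear_combination
    hF.sectional_null_expansion hdeg (real_inner_self_eq_norm_sq e).symm hea -
      2 * ‖e‖ * hF.apply_time_space_space_orthogonal_eq_zero hdeg hea +
      F (1, 0) (0, a) (0, a) (1, 0) * real_inner_self_eq_norm_sq e

theorem apply_time_space_space_space_eq_zero (hF : IsCurvatureLike (F · · · ·))
    (hdeg : ∀ x y, minkowski x x * minkowski y y - minkowski x y ^ 2 = 0 → F x y y x = 0)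
    (a b c : E) : F (1, 0) (0, a) (0, b) (0, c) = 0 :=
  let ι := LinearMap.inr ℝ ℝ E
  (((F (1, 0)).compl₁₂ ι ι).compr₂ ι.dualMap).eq_zero_of_cyclic_of_apply_self_orthogonal
    (fun _ _ _ => hF.antisymm_right _ _ _ _) (fun _ _ _ => hF.bianchi _ _ _ _)
    (fun a e hae =>
      hF.apply_time_space_space_orthogonal_eq_zero hdeg ((real_inner_comm a e).trans hae)) a b c

theorem exists_time_component_eq_smul_inner (hF : IsCurvatureLike (F · · · ·))
    (hdeg : ∀ x y, minkowski x x * minkowski y y - minkowski x y ^ 2 = 0 → F x y y x = 0) :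
    ∃ k : ℝ, ∀ a b : E, F (1, 0) (0, a) (0, b) (1, 0) = k * ⟪a, b⟫ :=
  let ι := LinearMap.inr ℝ ℝ E
  (((F (1, 0)).compl₁₂ ι ι).compr₂
      (Module.Dual.eval ℝ _ (1, 0))).exists_eq_smul_inner_of_orthogonal
    (fun _ _ => (hF.apply_rev _ _ _ _).symm) fun x e hex => by
      show F (1, 0) (0, x) (0, x) (1, 0) * ⟪e, e⟫ = F (1, 0) (0, e) (0, e) (1, 0) * ⟪x, x⟫
      have h := hF.sectional_space_orthogonal hdeg hex
      rw [hF.pair_symm] at h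
      linear_combination h - hF.sectional_space_orthogonal hdeg ((real_inner_comm e x).trans hex)

theorem sectional_space_eq (hF : IsCurvatureLike (F · · · ·))
    (hdeg : ∀ x y, minkowski x x * minkowski y y - minkowski x y ^ 2 = 0 → F x y y x = 0)
    {k : ℝ} (hk : ∀ a b : E, F (1, 0) (0, a) (0, b) (1, 0) = k * ⟪a, b⟫) (a b : E) :
    F (0, a) (0, b) (0, b) (0, a) = k * (⟪a, b⟫ ^ 2 - ⟪a, a⟫ * ⟪b, b⟫) := by
  obtain ⟨t, b', hb', rfl⟩ := exists_eq_smul_add_orthogonal a b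
  rw [show ((0 : ℝ), t • a + b') = (0, b') + t • (0, a) by simp [add_comm],
    hF.sectional_add_smul_right, hF.sectional_space_orthogonal hdeg hb', hk]
  simp only [inner_add_left, inner_add_right, real_inner_smul_left, real_inner_smul_right, hb',
    real_inner_comm a b']
  ring

theorem sectional_space_right_eq (hF : IsCurvatureLike (F · · · ·))
    (hdeg : ∀ x y, minkowski x x * minkowski y y - minkowski x y ^ 2 = 0 → F x y y x = 0)
    {k : ℝ} (hk : ∀ a b : E, F (1, 0) (0, a) (0, b) (1, 0) = k * ⟪a, b⟫) (x : ℝ × E) (b : E) :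
    F x (0, b) (0, b) x =
      k * (minkowski x (0, b) ^ 2 - minkowski x x * minkowski (0, b) (0, b)) := by
  obtain ⟨α, a⟩ := x
  rw [show ((α, a) : ℝ × E) = α • (1, 0) + (0, a) by simp, hF.sectional_add_left]
  simp only [map_smul, LinearMap.smul_apply, smul_eq_mul, hk,
    hF.apply_time_space_space_space_eq_zero hdeg, hF.sectional_space_eq hdeg hk, minkowski,
    Prod.fst_add, Prod.snd_add, Prod.smul_fst, Prod.smul_snd, smul_zero, zero_add]
  ring

theorem exists_sectional_eq_of_degenerate (hF : IsCurvatureLike (F · · · ·))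
    (hdeg : ∀ x y, minkowski x x * minkowski y y - minkowski x y ^ 2 = 0 → F x y y x = 0) :
    ∃ k : ℝ, ∀ x y, F x y y x = k * (minkowski x y ^ 2 - minkowski x x * minkowski y y) := by
  obtain ⟨k, hk⟩ := hF.exists_time_component_eq_smul_inner hdeg
  refine ⟨k, fun x y => ?_⟩
  rcases eq_or_ne x.1 0 with hx | hx
  · calc F x y y x = F y x x y := (hF.pair_symm x y y x).symm
      _ = _ := by
        rw [show x = (0, x.2) from Prod.ext hx rfl, hF.sectional_space_right_eq hdeg hk,
          minkowski_comm y]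
        ring
  · -- shearing `y` along `x` kills its time component without changing the plane
    set c := -(y.1 / x.1)
    rw [← hF.sectional_add_smul_right x y c, ← minkowski_gram_add_smul_right x y c,
      show y + c • x = (0, y.2 + c • x.2) from Prod.ext (by simp [c, field]) rfl]
    exact hF.sectional_space_right_eq hdeg hk x _

end IsCurvatureLike

end Minkowski

theorem curvature_like_vanishing_on_degenerate_planes_general {E : Type*} [NormedAddCommGroup E]
    [InnerProductSpace ℝ E]
    (g : (ℝ × E) → (ℝ × E) → ℝ)
    (hg : ∀ u v : ℝ × E, g u v = -(u.1 * v.1) + ⟪u.2, v.2⟫)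
    (F : (ℝ × E) →ₗ[ℝ] (ℝ × E) →ₗ[ℝ] (ℝ × E) →ₗ[ℝ] (ℝ × E) →ₗ[ℝ] ℝ)
    (halt : ∀ x y z w, F y x z w = -F x y z w)
    (hpair : ∀ x y z w, F z w x y = F x y z w)
    (hbianchi : ∀ x y z w, F x y z w + F x z w y + F x w y z = 0)
    (hdeg : ∀ x y : ℝ × E, g x x * g y y - (g x y) ^ 2 = 0 → F x y y x = 0) :
    ∃ k : ℝ, ∀ x y z w : ℝ × E,
      F x y z w = k * (g x z * g y w - g y z * g x w) := by
  obtain rfl : g = minkowski := funext₂ hg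
  have hF : IsCurvatureLike (F · · · ·) := ⟨halt, hpair, hbianchi⟩
  obtain ⟨k, hk⟩ := hF.exists_sectional_eq_of_degenerate hdeg
  have hT := hF.sub ((isCurvatureLike_gram minkowski minkowski_comm).const_mul k)
  refine ⟨k, fun x y z w => sub_eq_zero.1 (hT.eq_zero_of_sectional_eq_zero ?_ ?_ x y z w)⟩
  · intro x x' y z w
    simp only [map_add, LinearMap.add_apply, minkowski_add_left]
    ring
  · intro x y
    simp only [hk, minkowski_comm y x]
    ring

/-- Lemma 2.1, b ⇒ a: Let `F` be a curvature-like map on a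
finite-dimensional Lorentz vector space (modeled as `ℝ × E` with Lorentz metric
`g((a,x),(b,y)) = -a*b + ⟪x,y⟫`).  If `F(x,y,y,x) = 0` for every degenerate 2-plane
`span{x,y}` (i.e. whenever `g(x,x)g(y,y) - g(x,y)² = 0`), then there is a constant `k`
with `F(x,y,z,w) = k (g(x,z)g(y,w) - g(y,z)g(x,w))` for all `x,y,z,w`. -/
theorem curvature_like_vanishing_on_degenerate_planes {E : Type*} [NormedAddCommGroup E]
    [InnerProductSpace ℝ E] [FiniteDimensional ℝ E]
    (g : (ℝ × E) → (ℝ × E) → ℝ)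
    (hg : ∀ u v : ℝ × E, g u v = -(u.1 * v.1) + ⟪u.2, v.2⟫)
    (F : (ℝ × E) →ₗ[ℝ] (ℝ × E) →ₗ[ℝ] (ℝ × E) →ₗ[ℝ] (ℝ × E) →ₗ[ℝ] ℝ)
    (halt : ∀ x y z w, F y x z w = -F x y z w)
    (hpair : ∀ x y z w, F z w x y = F x y z w)
    (hbianchi : ∀ x y z w, F x y z w + F x z w y + F x w y z = 0)
    (hdeg : ∀ x y : ℝ × E, g x x * g y y - (g x y) ^ 2 = 0 → F x y y x = 0) :
    ∃ k : ℝ, ∀ x y z w : ℝ × E,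
      F x y z w = k * (g x z * g y w - g y z * g x w) :=
  curvature_like_vanishing_on_degenerate_planes_general g hg F halt hpair hbianchi hdeg
end

section
/- Let (V,g) be a pseudo-Euclidean vector space and F a curvature-like map on V. If the sectional value k(z,w) = F(z,w,z,w) / (g(z,z)g(w,w) - g(z,w)²) is equal to a constant k for every non-degenerate 2-plane span{z,w}, then F(x,y,z,w) = k (g(x,z)g(y,w) - g(y,z)g(x,w)) for all x,y,z,w ∈ V. -/
/-!
Two curvature-like maps with the same values `F z w z w` coincide: polarizing in each pair
recovers `F x y z w + F x w z y`, and the Bianchi identity then isolates `F x y z w`. The map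
`k (g x z g y w - g y z g x w)` is curvature-like with values `k` times the Gram determinant, so
it suffices to extend `F z w z w = k (g z z g w w - g z w²)` from non-degenerate to all planes.
If some plane `(p, q)` is non-degenerate, both sides are polynomials along the line from `(z, w)`
to `(p, q)` that agree off the finitely many roots of the Gram polynomial, hence everywhere. If no
plane is, nondegeneracy of `g` forces all vectors to be collinear and both sides vanish.
-/
open Polynomial

theorem Polynomial.eq_zero_of_eval_eq_zero_of_eval_ne_zero {R : Type*} [CommRing R] [IsDomain R]
    [Infinite R] {p q : R[X]} (hq : q ≠ 0) (h : ∀ t, q.eval t ≠ 0 → p.eval t = 0) : p = 0 := by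
  have hpq : p * q = 0 := Polynomial.funext fun t => by
    by_cases ht : q.eval t = 0 <;> simp [ht, h t]
  exact (mul_eq_zero.mp hpq).resolve_right hq

section Lines

variable {R V W : Type*} [CommRing R] [AddCommGroup V] [Module R V] [AddCommGroup W] [Module R W]

theorem LinearMap.exists_eval_eq_apply_line (B : V →ₗ[R] W →ₗ[R] R) (z u : V) (w v : W) :
    ∃ p : R[X], ∀ t : R, p.eval t = B (z + t • u) (w + t • v) :=
  ⟨C (B z w) + C (B z v + B u w) * X + C (B u v) * X ^ 2, fun t => by simp; ring⟩

theorem LinearMap.exists_eval_eq_apply_line₄ (F : V →ₗ[R] W →ₗ[R] V →ₗ[R] W →ₗ[R] R)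
    (z u : V) (w v : W) :
    ∃ p : R[X], ∀ t : R, p.eval t = F (z + t • u) (w + t • v) (z + t • u) (w + t • v) := by
  obtain ⟨p₀, hp₀⟩ := (F z w).exists_eval_eq_apply_line z u w v
  obtain ⟨p₁, hp₁⟩ := (F z v + F u w).exists_eval_eq_apply_line z u w v
  obtain ⟨p₂, hp₂⟩ := (F u v).exists_eval_eq_apply_line z u w v
  refine ⟨p₀ + X * p₁ + X ^ 2 * p₂, fun t => ?_⟩
  simp [hp₀, hp₁, hp₂]
  ring

end Lines

section Gram

variable {K V : Type*} [Field K] [AddCommGroup V] [Module K V]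

def gramDet (g : V →ₗ[K] V →ₗ[K] K) (z w : V) : K := g z z * g w w - g z w ^ 2

theorem exists_eval_eq_gramDet_line (g : V →ₗ[K] V →ₗ[K] K) (z u w v : V) :
    ∃ p : K[X], ∀ t : K, p.eval t = gramDet g (z + t • u) (w + t • v) := by
  obtain ⟨a, ha⟩ := g.exists_eval_eq_apply_line z u z u
  obtain ⟨b, hb⟩ := g.exists_eval_eq_apply_line z u w v
  obtain ⟨d, hd⟩ := g.exists_eval_eq_apply_line w v w v
  exact ⟨a * d - b ^ 2, fun t => by simp [ha, hb, hd, gramDet]⟩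

theorem apply_self_eq_mul_gramDet_of_gramDet_ne_zero [Infinite K]
    {g : V →ₗ[K] V →ₗ[K] K} {F : V →ₗ[K] V →ₗ[K] V →ₗ[K] V →ₗ[K] K} {k : K}
    (hk : ∀ z w, gramDet g z w ≠ 0 → F z w z w = k * gramDet g z w)
    {p q : V} (hpq : gramDet g p q ≠ 0) (z w : V) : F z w z w = k * gramDet g z w := by
  obtain ⟨P, hP⟩ := F.exists_eval_eq_apply_line₄ z (p - z) w (q - w)
  obtain ⟨Q, hQ⟩ := exists_eval_eq_gramDet_line g z (p - z) w (q - w)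
  have hQ₁ : Q.eval 1 ≠ 0 := by simpa [hQ] using hpq
  have hQ₀ : Q ≠ 0 := fun h => hQ₁ (by rw [h, eval_zero])
  have hPQ : P - C k * Q = 0 := by
    refine eq_zero_of_eval_eq_zero_of_eval_ne_zero hQ₀ fun t ht => ?_
    rw [hQ] at ht
    rw [eval_sub, eval_mul, eval_C, hP, hQ, hk _ _ ht, sub_self]
  have h₀ := congrArg (eval 0) hPQ
  rw [eval_sub, eval_mul, eval_C, hP, hQ, eval_zero, sub_eq_zero] at h₀
  simpa using h₀

theorem exists_eq_smul_of_forall_gramDet_eq_zero {g : V →ₗ[K] V →ₗ[K] K}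
    (hnondeg : ∀ x, (∀ y, g x y = 0) → x = 0) (hdeg : ∀ z w, gramDet g z w = 0)
    {z : V} (hz : z ≠ 0) (w : V) : ∃ c : K, w = c • z := by
  -- isotropic vectors lie in the radical, since `g x y ^ 2 = g x x * g y y`
  have iso : ∀ x, g x x = 0 → x = 0 := fun x hx => hnondeg x fun y => by
    simpa [gramDet, hx] using hdeg x y
  have hzz : g z z ≠ 0 := fun h => hz (iso z h)
  set w' := w - (g z w / g z z) • z
  have hzw' : g z w' = 0 := by simp [w', hzz]
  have hw' : g w' w' = 0 := by simpa [gramDet, hzw', hzz] using hdeg z w'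
  exact ⟨g z w / g z z, sub_eq_zero.mp (iso w' hw')⟩

end Gram

section Curvature

variable {K V : Type*} [Field K] [AddCommGroup V] [Module K V]

structure IsCurvatureLike_s6 (F : V →ₗ[K] V →ₗ[K] V →ₗ[K] V →ₗ[K] K) : Prop where
  antisymm : ∀ x y z w, F y x z w = -F x y z w
  pair_symm : ∀ x y z w, F z w x y = F x y z w
  bianchi : ∀ x y z w, F x y z w + F x z w y + F x w y z = 0

namespace IsCurvatureLike_s6

variable {F G : V →ₗ[K] V →ₗ[K] V →ₗ[K] V →ₗ[K] K}

theorem apply_self_left_s6 [CharZero K] (hF : IsCurvatureLike_s6 F) (x : V) : F x x = 0 := by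
  ext z w
  rw [LinearMap.zero_apply, LinearMap.zero_apply]
  linear_combination hF.antisymm x x z w / 2

theorem antisymm_right_s6 (hF : IsCurvatureLike_s6 F) (x y z w : V) : F x y w z = -F x y z w := by
  rw [← hF.pair_symm, hF.antisymm, hF.pair_symm]

theorem ext_of_apply_self [CharZero K] (hF : IsCurvatureLike_s6 F) (hG : IsCurvatureLike_s6 G)
    (h : ∀ z w, F z w z w = G z w z w) : F = G := by
  have h₁ : ∀ x z w, F x w z w = G x w z w := fun x z w => by
    have := h (x + z) w
    simp only [map_add, LinearMap.add_apply] at this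
    linear_combination (this - h x w - h z w + hF.pair_symm z w x w - hG.pair_symm z w x w) / 2
  have h₂ : ∀ x y z w, F x y z w + F x w z y = G x y z w + G x w z y := fun x y z w => by
    have := h₁ x z (y + w)
    simp only [map_add, LinearMap.add_apply] at this
    linear_combination this - h₁ x z y - h₁ x z w
  -- with `D := F - G`, `h₂` and `antisymm_right` make the three Bianchi terms of `D` equal
  ext x y z w
  linear_combination (hF.bianchi x y z w - hG.bianchi x y z w - 2 * h₂ x z w y - h₂ x w y z
    + 2 * (hF.antisymm_right_s6 x y z w - hG.antisymm_right_s6 x y z w)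
    + (hF.antisymm_right_s6 x z w y - hG.antisymm_right_s6 x z w y)) / 3

theorem apply_self_eq_mul_gramDet [CharZero K] {g : V →ₗ[K] V →ₗ[K] K}
    (hF : IsCurvatureLike_s6 F) (hnondeg : ∀ x, (∀ y, g x y = 0) → x = 0) {k : K}
    (hk : ∀ z w, gramDet g z w ≠ 0 → F z w z w = k * gramDet g z w) (z w : V) :
    F z w z w = k * gramDet g z w := by
  by_cases hex : ∃ p q, gramDet g p q ≠ 0
  · obtain ⟨p, q, hpq⟩ := hex
    exact apply_self_eq_mul_gramDet_of_gramDet_ne_zero hk hpq z w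
  push Not at hex
  rw [hex z w, mul_zero]
  rcases eq_or_ne z 0 with rfl | hz
  · simp
  obtain ⟨c, rfl⟩ := exists_eq_smul_of_forall_gramDet_eq_zero hnondeg hex hz w
  simp [hF.apply_self_left_s6]

end IsCurvatureLike_s6

def constCurvature (k : K) (g : V →ₗ[K] V →ₗ[K] K) : V →ₗ[K] V →ₗ[K] V →ₗ[K] V →ₗ[K] K :=
  LinearMap.mk₂ K
    (fun x y => k • (LinearMap.smulRightₗ (g x) (g y) - LinearMap.smulRightₗ (g y) (g x)))
    (fun _ _ _ => by ext; simp; ring) (fun _ _ _ => by ext; simp; ring)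
    (fun _ _ _ => by ext; simp; ring) (fun _ _ _ => by ext; simp; ring)

@[simp]
theorem constCurvature_apply (k : K) (g : V →ₗ[K] V →ₗ[K] K) (x y z w : V) :
    constCurvature k g x y z w = k * (g x z * g y w - g y z * g x w) := by
  simp [constCurvature]

theorem isCurvatureLike_constCurvature (k : K) {g : V →ₗ[K] V →ₗ[K] K}
    (hsym : ∀ x y, g x y = g y x) : IsCurvatureLike_s6 (constCurvature k g) where
  antisymm x y z w := by simp only [constCurvature_apply]; ring
  pair_symm x y z w := by
    simp only [constCurvature_apply, hsym z x, hsym w y, hsym w x, hsym z y]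
    ring
  bianchi x y z w := by simp only [constCurvature_apply, hsym w y, hsym z w, hsym y z]; ring

end Curvature

theorem curvature_like_constant_sectional_general {V : Type*} [AddCommGroup V] [Module ℝ V]
    (g : V →ₗ[ℝ] V →ₗ[ℝ] ℝ)
    (hsym : ∀ x y, g x y = g y x)
    (hnondeg : ∀ x, (∀ y, g x y = 0) → x = 0)
    (F : V →ₗ[ℝ] V →ₗ[ℝ] V →ₗ[ℝ] V →ₗ[ℝ] ℝ)
    (halt : ∀ x y z w, F y x z w = -F x y z w)
    (hpair : ∀ x y z w, F z w x y = F x y z w)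
    (hbianchi : ∀ x y z w, F x y z w + F x z w y + F x w y z = 0)
    (k : ℝ)
    (hk : ∀ z w, g z z * g w w - (g z w) ^ 2 ≠ 0 →
      F z w z w = k * (g z z * g w w - (g z w) ^ 2)) :
    ∀ x y z w, F x y z w = k * (g x z * g y w - g y z * g x w) := by
  have hF : IsCurvatureLike_s6 F := ⟨halt, hpair, hbianchi⟩
  have hFR : F = constCurvature k g :=
    hF.ext_of_apply_self (isCurvatureLike_constCurvature k hsym) fun z w => by
      rw [hF.apply_self_eq_mul_gramDet hnondeg hk, constCurvature_apply, gramDet, hsym w z]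
      ring
  intro x y z w
  rw [hFR, constCurvature_apply]

/-- Let `(V,g)` be a (finite-dimensional) pseudo-Euclidean vector space
(`g` a nondegenerate symmetric bilinear form) and `F` a curvature-like map on `V`.  If the
sectional value `k(z,w) = F(z,w,z,w) / (g(z,z)g(w,w) - g(z,w)²)` equals a constant `k` for
every non-degenerate 2-plane `span{z,w}`, then
`F(x,y,z,w) = k (g(x,z)g(y,w) - g(y,z)g(x,w))` for all `x,y,z,w ∈ V`. -/
theorem curvature_like_constant_sectional {V : Type*} [AddCommGroup V] [Module ℝ V]
    [FiniteDimensional ℝ V]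
    (g : V →ₗ[ℝ] V →ₗ[ℝ] ℝ)
    (hsym : ∀ x y, g x y = g y x)
    (hnondeg : ∀ x, (∀ y, g x y = 0) → x = 0)
    (F : V →ₗ[ℝ] V →ₗ[ℝ] V →ₗ[ℝ] V →ₗ[ℝ] ℝ)
    (halt : ∀ x y z w, F y x z w = -F x y z w)
    (hpair : ∀ x y z w, F z w x y = F x y z w)
    (hbianchi : ∀ x y z w, F x y z w + F x z w y + F x w y z = 0)
    (k : ℝ)
    (hk : ∀ z w, g z z * g w w - (g z w) ^ 2 ≠ 0 →
      F z w z w = k * (g z z * g w w - (g z w) ^ 2)) :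
    ∀ x y z w, F x y z w = k * (g x z * g y w - g y z * g x w) :=
  curvature_like_constant_sectional_general g hsym hnondeg F halt hpair hbianchi k hk
end

section
/- Define S*(x,y)v = η̃(y)η̃(v)x - η̃(x)η̃(v)y + g(y,v)η̃(x)ξ̃ - g(x,v)η̃(y)ξ̃ and S_*(x,y)v = -g(φy,φv)φ²x + g(φx,φv)φ²y on a Lorentz g.f.f-structure with s = 2, ξ_1 timelike. Then for any u = ξ_1 + x₁ with x₁ ∈ Im φ, g(x₁,x₁)=1, and any y ∈ Im φ ∩ u^⊥: g(S*(u,y)u, y) = g(S_*(u,y)u, y). -/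
/-! Since `η̃(y) = 0` and `g(y,u) = 0`, the vector `S*(u,y)u` collapses to `-η̃(u)² y = -y`.
Since `φ²` kills the `ξ`-components and `g(φy,φu) = g(y,x₁) = 0`, the vector `S_*(u,y)u`
collapses to `-g(x₁,x₁) y = -y`. So the two vectors agree even before pairing with `y`. -/

open RealInnerProductSpace

noncomputable section

variable {W : Type*} [NormedAddCommGroup W] [InnerProductSpace ℝ W]

/-- The Lorentz metric on `V = Im φ ⊕ span{ξ₁,ξ₂}`, modeled as `W × ℝ × ℝ` with
`Im φ = W` (where `g` is positive definite), `ξ₁ = (0,1,0)` timelike and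
`ξ₂ = (0,0,1)` spacelike. -/
def lg (v w : W × ℝ × ℝ) : ℝ := ⟪v.1, w.1⟫ - v.2.1 * w.2.1 + v.2.2 * w.2.2

/-- `η̃ = ε₁ η¹ + ε₂ η² = -η¹ + η²`. -/
def etat (v : W × ℝ × ℝ) : ℝ := -v.2.1 + v.2.2

/-- `ξ̃ = ξ₁ + ξ₂`. -/
def xit : W × ℝ × ℝ := (0, 1, 1)

/-- `S*(x,y)v = η̃(y)η̃(v)x - η̃(x)η̃(v)y + g(y,v)η̃(x)ξ̃ - g(x,v)η̃(y)ξ̃`. -/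
def Sstar (x y v : W × ℝ × ℝ) : W × ℝ × ℝ :=
  (etat y * etat v) • x - (etat x * etat v) • y
    + (lg y v * etat x) • xit - (lg x v * etat y) • xit

/-- `S_*(x,y)v = -g(φy,φv)φ²x + g(φx,φv)φ²y`. -/
def Sund (φ : (W × ℝ × ℝ) →ₗ[ℝ] (W × ℝ × ℝ)) (x y v : W × ℝ × ℝ) : W × ℝ × ℝ :=
  -(lg (φ y) (φ v)) • (φ (φ x)) + (lg (φ x) (φ v)) • (φ (φ y))

theorem Sstar_self_right_of_etat_eq_zero (u y : W × ℝ × ℝ) (hy : etat y = 0)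
    (hyu : lg y u = 0) :
    Sstar u y u = -(etat u ^ 2) • y := by
  simp only [Sstar, hy, hyu]
  module

theorem Sund_self_right_of_inner_eq_zero (φ : (W × ℝ × ℝ) →ₗ[ℝ] (W × ℝ × ℝ))
    (hφ2 : ∀ v : W × ℝ × ℝ, φ (φ v) = (-v.1, 0, 0))
    (hφg : ∀ a b : W × ℝ × ℝ, lg (φ a) (φ b) = ⟪a.1, b.1⟫)
    (u y : W × ℝ × ℝ) (hyu : ⟪y.1, u.1⟫ = 0) :
    Sund φ u y u = -⟪u.1, u.1⟫ • ((y.1, 0, 0) : W × ℝ × ℝ) := by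
  simp only [Sund, hφ2, hφg, hyu]
  ext <;> simp

theorem Sstar_eq_Sund_on_null_congruence_general
    (φ : (W × ℝ × ℝ) →ₗ[ℝ] (W × ℝ × ℝ))
    (hφ2 : ∀ v : W × ℝ × ℝ, φ (φ v) = (-v.1, 0, 0))
    (hφg : ∀ a b : W × ℝ × ℝ, lg (φ a) (φ b) = ⟪a.1, b.1⟫)
    (x₁ : W) (hx₁ : ⟪x₁, x₁⟫ = 1)
    (y : W) (hy : lg ((y, 0, 0) : W × ℝ × ℝ) ((x₁, 1, 0) : W × ℝ × ℝ) = 0) :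
    lg (Sstar ((x₁, 1, 0) : W × ℝ × ℝ) ((y, 0, 0) : W × ℝ × ℝ) ((x₁, 1, 0) : W × ℝ × ℝ))
        ((y, 0, 0) : W × ℝ × ℝ) =
    lg (Sund φ ((x₁, 1, 0) : W × ℝ × ℝ) ((y, 0, 0) : W × ℝ × ℝ)
        ((x₁, 1, 0) : W × ℝ × ℝ)) ((y, 0, 0) : W × ℝ × ℝ) := by
  have hyx : ⟪y, x₁⟫ = 0 := by simpa [lg] using hy
  rw [Sstar_self_right_of_etat_eq_zero _ _ (by simp [etat]) hy,
    Sund_self_right_of_inner_eq_zero φ hφ2 hφg _ _ hyx, hx₁]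
  simp [etat]

/-- Remark 5.5: On a Lorentz g.f.f-structure with `s = 2` and `ξ₁`
timelike, for any `u = ξ₁ + x₁` with `x₁ ∈ Im φ`, `g(x₁,x₁) = 1`, and any
`y ∈ Im φ ∩ u^⊥`:  `g(S*(u,y)u, y) = g(S_*(u,y)u, y)`. -/
theorem Sstar_eq_Sund_on_null_congruence
    (φ : (W × ℝ × ℝ) →ₗ[ℝ] (W × ℝ × ℝ))
    (hφIm : ∀ v : W × ℝ × ℝ, (φ v).2 = (0, 0))
    (hφ2 : ∀ v : W × ℝ × ℝ, φ (φ v) = (-v.1, 0, 0))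
    (hφg : ∀ a b : W × ℝ × ℝ, lg (φ a) (φ b) = ⟪a.1, b.1⟫)
    (x₁ : W) (hx₁ : ⟪x₁, x₁⟫ = 1)
    (y : W) (hy : lg ((y, 0, 0) : W × ℝ × ℝ) ((x₁, 1, 0) : W × ℝ × ℝ) = 0) :
    lg (Sstar ((x₁, 1, 0) : W × ℝ × ℝ) ((y, 0, 0) : W × ℝ × ℝ) ((x₁, 1, 0) : W × ℝ × ℝ))
        ((y, 0, 0) : W × ℝ × ℝ) =
    lg (Sund φ ((x₁, 1, 0) : W × ℝ × ℝ) ((y, 0, 0) : W × ℝ × ℝ)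
        ((x₁, 1, 0) : W × ℝ × ℝ)) ((y, 0, 0) : W × ℝ × ℝ) :=
  Sstar_eq_Sund_on_null_congruence_general φ hφ2 hφg x₁ hx₁ y hy
end
end

section
/- Let F be a curvature-like map on a (2n+2)-dimensional Lorentz g.f.f-vector space with s = 2 and ξ_1 timelike, satisfying F(x,ξ_α,y,v) = 0, F(ξ_α,x,ξ_β,y) = ε_α ε_β g(x,y), F(ξ_α,x,ξ_β,ξ_γ) = 0 and F(ξ_1,ξ_2,ξ_1,ξ_2) = 0 for x,y,v ∈ Im φ. If F(u,y,u,y) = 0 for every u = ξ_1 + x₁ with x₁ ∈ Im φ unit and every y ∈ u^⊥ ∩ Im φ, then F(x,y,v,z) = g(S_*(x,y)v, z) - g(S*(x,y)v, z) for all x,y,v,z. -/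
/-!
A curvature-like tensor is determined, by polarization, by its sectional values `R(x,y,x,y)`, and
in a Euclidean space already by those on orthonormal pairs. For `x₁ ∈ Im φ` a unit vector and
`y ⊥ x₁`, expanding `F(ξ₁ + x₁, y, ξ₁ + x₁, y) = 0` with conditions (9) gives
`F(x₁,y,x₁,y) = -g(y,y)`, so on `Im φ` the map `F` is `g(y,v)g(x,z) - g(x,v)g(y,z)`, i.e.
`g(S_*(x,y)v,z)`. The components of `F` with at least one `ξ_α` are fixed by (9) and the
symmetries (the Bianchi identity gives `F(x,y,ξ_α,ξ_β) = 0`), and they agree with those of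
`-g(S*(x,y)v,z)`.
-/

open RealInnerProductSpace

noncomputable section

variable {W : Type*} [NormedAddCommGroup W] [InnerProductSpace ℝ W]

/-- The characteristic vectors `ξ₁ = (0,1,0)` (timelike) and `ξ₂ = (0,0,1)` (spacelike). -/
def xiv : Fin 2 → W × ℝ × ℝ := ![(0, 1, 0), (0, 0, 1)]

/-- The causal characters `ε₁ = -1`, `ε₂ = 1`. -/
def eps : Fin 2 → ℝ := ![-1, 1]

/-- Only additivity and homogeneity in the first argument are required: the symmetries transport
them to the other three. -/
structure IsCurvatureLike_s13 {K M : Type*} [CommRing K] [AddCommGroup M] [Module K M]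
    (R : M → M → M → M → K) : Prop where
  map_add₁ : ∀ x x' y v z, R (x + x') y v z = R x y v z + R x' y v z
  map_smul₁ : ∀ (c : K) x y v z, R (c • x) y v z = c * R x y v z
  antisymm : ∀ x y v z, R y x v z = -R x y v z
  pair_comm : ∀ x y v z, R v z x y = R x y v z
  bianchi : ∀ x y v z, R x y v z + R x v z y + R x z y v = 0

namespace IsCurvatureLike_s13

section CommRing

variable {K M : Type*} [CommRing K] [AddCommGroup M] [Module K M] {R S : M → M → M → M → K}

theorem antisymm' (hR : IsCurvatureLike_s13 R) (x y v z : M) : R x y z v = -R x y v z := by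
  rw [← hR.pair_comm x y, hR.antisymm, hR.pair_comm]

theorem map_add₂ (hR : IsCurvatureLike_s13 R) (x y y' v z : M) :
    R x (y + y') v z = R x y v z + R x y' v z := by
  rw [hR.antisymm, hR.map_add₁, hR.antisymm y, hR.antisymm y', neg_add]

theorem map_add₃ (hR : IsCurvatureLike_s13 R) (x y v v' z : M) :
    R x y (v + v') z = R x y v z + R x y v' z := by
  rw [← hR.pair_comm, hR.map_add₁, hR.pair_comm, hR.pair_comm v']

theorem map_add₄ (hR : IsCurvatureLike_s13 R) (x y v z z' : M) :
    R x y v (z + z') = R x y v z + R x y v z' := by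
  rw [hR.antisymm', hR.map_add₃, hR.antisymm' x y z, hR.antisymm' x y z', neg_add]

theorem map_smul₂ (hR : IsCurvatureLike_s13 R) (c : K) (x y v z : M) :
    R x (c • y) v z = c * R x y v z := by
  rw [hR.antisymm, hR.map_smul₁, hR.antisymm y, mul_neg]

theorem map_smul₃ (hR : IsCurvatureLike_s13 R) (c : K) (x y v z : M) :
    R x y (c • v) z = c * R x y v z := by
  rw [← hR.pair_comm, hR.map_smul₁, hR.pair_comm]

theorem map_smul₄ (hR : IsCurvatureLike_s13 R) (c : K) (x y v z : M) :
    R x y v (c • z) = c * R x y v z := by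
  rw [hR.antisymm', hR.map_smul₃, hR.antisymm' x y z, mul_neg]

theorem sub_s13 (hR : IsCurvatureLike_s13 R) (hS : IsCurvatureLike_s13 S) :
    IsCurvatureLike_s13 fun x y v z => R x y v z - S x y v z where
  map_add₁ x x' y v z := by simp only [hR.map_add₁, hS.map_add₁]; ring
  map_smul₁ c x y v z := by simp only [hR.map_smul₁, hS.map_smul₁]; ring
  antisymm x y v z := by simp only [hR.antisymm x y, hS.antisymm x y]; ring
  pair_comm x y v z := by simp only [hR.pair_comm, hS.pair_comm]
  bianchi x y v z := by linear_combination hR.bianchi x y v z - hS.bianchi x y v z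

theorem comp (hR : IsCurvatureLike_s13 R) {N : Type*} [AddCommGroup N] [Module K N]
    (f : N →ₗ[K] M) : IsCurvatureLike_s13 fun x y v z => R (f x) (f y) (f v) (f z) where
  map_add₁ x x' y v z := by simp only [map_add, hR.map_add₁]
  map_smul₁ c x y v z := by simp only [map_smul, hR.map_smul₁]
  antisymm x y v z := hR.antisymm _ _ _ _
  pair_comm x y v z := hR.pair_comm _ _ _ _
  bianchi x y v z := hR.bianchi _ _ _ _

theorem sectional_smul (hR : IsCurvatureLike_s13 R) (c : K) (x y : M) :
    R (c • x) y (c • x) y = c ^ 2 * R x y x y := by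
  rw [hR.map_smul₁, hR.map_smul₃]; ring

end CommRing

section CharZero

variable {K M : Type*} [Field K] [CharZero K] [AddCommGroup M] [Module K M]
  {R S : M → M → M → M → K}

theorem apply_self_left_s13 (hR : IsCurvatureLike_s13 R) (x v z : M) : R x x v z = 0 := by
  linear_combination (2 : K)⁻¹ * hR.antisymm x x v z

theorem apply_self_right_s13 (hR : IsCurvatureLike_s13 R) (x y v : M) : R x y v v = 0 := by
  rw [← hR.pair_comm, hR.apply_self_left_s13]

theorem sectional_add_smul (hR : IsCurvatureLike_s13 R) (c : K) (x y : M) :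
    R x (y + c • x) x (y + c • x) = R x y x y := by
  simp only [hR.map_add₂, hR.map_add₄, hR.map_smul₂, hR.map_smul₄, hR.apply_self_left_s13,
    hR.apply_self_right_s13]
  ring

theorem eq_zero_of_sectional_eq_zero_s13 (hR : IsCurvatureLike_s13 R) (hsec : ∀ x y, R x y x y = 0)
    (x y v z : M) : R x y v z = 0 := by
  have hsec₃ : ∀ x y z, R x y z y = 0 := fun x y z => by
    have h := hsec (x + z) y
    simp only [hR.map_add₁, hR.map_add₃, hsec, hR.pair_comm x y z y] at h
    linear_combination (2 : K)⁻¹ * h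
  have hswap : ∀ x y z w, R x y z w = -R x w z y := fun x y z w => by
    have h := hsec₃ x (y + w) z
    simp only [hR.map_add₂, hR.map_add₄, hsec₃] at h
    linear_combination h
  linear_combination (3 : K)⁻¹ * (hR.bianchi x y v z - 2 * hswap x v z y
    + 2 * hR.antisymm' x y z v - hswap x z y v + hR.antisymm' x v y z)

theorem eq_of_sectional_eq (hR : IsCurvatureLike_s13 R) (hS : IsCurvatureLike_s13 S)
    (hsec : ∀ x y, R x y x y = S x y x y) (x y v z : M) : R x y v z = S x y v z :=
  sub_eq_zero.mp <| (hR.sub_s13 hS).eq_zero_of_sectional_eq_zero_s13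
    (fun x y => sub_eq_zero.mpr (hsec x y)) x y v z

theorem apply_fin_two_eq_zero (hR : IsCurvatureLike_s13 R) (e : Fin 2 → M)
    (he : R (e 0) (e 1) (e 0) (e 1) = 0) (α β γ δ : Fin 2) :
    R (e α) (e β) (e γ) (e δ) = 0 := by
  fin_cases α <;> fin_cases β <;> fin_cases γ <;> fin_cases δ <;>
    simp [hR.apply_self_left_s13, hR.apply_self_right_s13, hR.antisymm (e 0) (e 1),
      hR.antisymm' _ _ (e 0), he]

end CharZero

section InnerProductSpace

variable {R S : W → W → W → W → ℝ}

theorem sectional_eq_zero_of_orthonormal (hR : IsCurvatureLike_s13 R)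
    (h : ∀ u y, ⟪u, u⟫ = 1 → ⟪y, u⟫ = 0 → R u y u y = 0) (x y : W) : R x y x y = 0 := by
  rcases eq_or_ne x 0 with rfl | hx
  · simpa using hR.sectional_smul 0 0 y
  set u := ‖x‖⁻¹ • x
  have hu : ⟪u, u⟫ = 1 := by
    rw [real_inner_self_eq_norm_sq, norm_smul, norm_inv, norm_norm,
      inv_mul_cancel₀ (norm_ne_zero_iff.mpr hx), one_pow]
  have hxu : x = ‖x‖ • u := by simp [u, smul_smul, hx]
  have hyu : y = (y - ⟪y, u⟫ • u) + ⟪y, u⟫ • u := by abel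
  have hperp : ⟪y - ⟪y, u⟫ • u, u⟫ = 0 := by
    rw [inner_sub_left, real_inner_smul_left, hu, mul_one, sub_self]
  rw [hxu, hR.sectional_smul, hyu, hR.sectional_add_smul, h u _ hu hperp, mul_zero]

theorem eq_of_sectional_eq_of_orthonormal (hR : IsCurvatureLike_s13 R) (hS : IsCurvatureLike_s13 S)
    (h : ∀ u y, ⟪u, u⟫ = 1 → ⟪y, u⟫ = 0 → R u y u y = S u y u y) (x y v z : W) :
    R x y v z = S x y v z :=
  hR.eq_of_sectional_eq hS (fun x y => sub_eq_zero.mp <|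
    (hR.sub_s13 hS).sectional_eq_zero_of_orthonormal
      (fun u y hu hyu => sub_eq_zero.mpr (h u y hu hyu)) x y) x y v z

end InnerProductSpace

end IsCurvatureLike_s13

/-- `g(S_*(x,y)v, z)` for `x, y, v, z ∈ Im φ`. -/
def innerCurvature (x y v z : W) : ℝ := ⟪y, v⟫ * ⟪x, z⟫ - ⟪x, v⟫ * ⟪y, z⟫

theorem isCurvatureLike_innerCurvature : IsCurvatureLike_s13 (innerCurvature (W := W)) where
  map_add₁ x x' y v z := by simp only [innerCurvature, inner_add_left]; ring
  map_smul₁ c x y v z := by simp only [innerCurvature, real_inner_smul_left]; ring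
  antisymm x y v z := by simp only [innerCurvature]; ring
  pair_comm x y v z := by
    simp only [innerCurvature, real_inner_comm x v, real_inner_comm y z, real_inner_comm x z,
      real_inner_comm y v]
    ring
  bianchi x y v z := by
    simp only [innerCurvature, real_inner_comm y v, real_inner_comm y z, real_inner_comm v z]
    ring

theorem isCurvatureLike_of_linearMap {K M : Type*} [CommRing K] [AddCommGroup M] [Module K M]
    (F : M →ₗ[K] M →ₗ[K] M →ₗ[K] M →ₗ[K] K)
    (halt : ∀ x y v z, F y x v z = -F x y v z) (hpair : ∀ x y v z, F v z x y = F x y v z)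
    (hbianchi : ∀ x y v z, F x y v z + F x v z y + F x z y v = 0) :
    IsCurvatureLike_s13 fun x y v z => F x y v z where
  map_add₁ x x' y v z := by simp only [map_add, LinearMap.add_apply]
  map_smul₁ c x y v z := by simp only [map_smul, LinearMap.smul_apply, smul_eq_mul]
  antisymm := halt
  pair_comm := hpair
  bianchi := hbianchi

theorem eq_inl_add_smul_xiv (w : W × ℝ × ℝ) :
    w = ((w.1, 0, 0) : W × ℝ × ℝ) + w.2.1 • xiv 0 + w.2.2 • xiv 1 := by
  simp [xiv]

theorem lg_Sund {φ : (W × ℝ × ℝ) →ₗ[ℝ] (W × ℝ × ℝ)}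
    (hφ2 : ∀ v : W × ℝ × ℝ, φ (φ v) = (-v.1, 0, 0))
    (hφg : ∀ a b : W × ℝ × ℝ, lg (φ a) (φ b) = ⟪a.1, b.1⟫) (x y v z : W × ℝ × ℝ) :
    lg (Sund φ x y v) z = innerCurvature x.1 y.1 v.1 z.1 := by
  simp only [Sund, hφg, hφ2]
  simp only [lg, innerCurvature, Prod.fst_add, Prod.snd_add, Prod.smul_fst,
    Prod.smul_snd, smul_eq_mul, inner_add_left, real_inner_smul_left, inner_neg_left]
  ring

theorem lg_Sstar (x y v z : W × ℝ × ℝ) :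
    lg (Sstar x y v) z = etat y * etat v * lg x z - etat x * etat v * lg y z
      + lg y v * etat x * etat z - lg x v * etat y * etat z := by
  simp only [Sstar, xit, lg, etat, Prod.fst_add, Prod.snd_add, Prod.fst_sub, Prod.snd_sub,
    Prod.smul_fst, Prod.smul_snd, smul_eq_mul, inner_add_left, inner_sub_left,
    real_inner_smul_left, inner_zero_left]
  ring

section Components

variable {R : W × ℝ × ℝ → W × ℝ × ℝ → W × ℝ × ℝ → W × ℝ × ℝ → ℝ}

theorem restrict_eq_innerCurvature (hR : IsCurvatureLike_s13 R)
    (h1 : ∀ (x y v : W) (α : Fin 2),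
      R ((x, 0, 0) : W × ℝ × ℝ) (xiv α) ((y, 0, 0) : W × ℝ × ℝ) ((v, 0, 0) : W × ℝ × ℝ) = 0)
    (h2 : ∀ (x y : W) (α β : Fin 2),
      R (xiv α) ((x, 0, 0) : W × ℝ × ℝ) (xiv β) ((y, 0, 0) : W × ℝ × ℝ) =
        eps α * eps β * ⟪x, y⟫)
    (hdeg : ∀ x₁ : W, ⟪x₁, x₁⟫ = 1 → ∀ y : W, ⟪y, x₁⟫ = 0 →
      R ((x₁, 1, 0) : W × ℝ × ℝ) ((y, 0, 0) : W × ℝ × ℝ)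
        ((x₁, 1, 0) : W × ℝ × ℝ) ((y, 0, 0) : W × ℝ × ℝ) = 0)
    (x y v z : W) :
    R (x, 0, 0) (y, 0, 0) (v, 0, 0) (z, 0, 0) = innerCurvature x y v z := by
  refine (hR.comp (LinearMap.inl ℝ W (ℝ × ℝ))).eq_of_sectional_eq_of_orthonormal
    isCurvatureLike_innerCurvature (fun u y hu hyu => ?_) x y v z
  change R (u, 0, 0) (y, 0, 0) (u, 0, 0) (y, 0, 0) = innerCurvature u y u y
  have hmix : R (xiv 0) (y, 0, 0) (u, 0, 0) (y, 0, 0) = 0 := by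
    rw [hR.antisymm, h1, neg_zero]
  have h := hdeg u hu y hyu
  rw [show ((u, 1, 0) : W × ℝ × ℝ) = (u, 0, 0) + xiv 0 by simp [xiv], hR.map_add₁,
    hR.map_add₃, hR.map_add₃, hR.pair_comm (xiv 0) (y, 0, 0) (u, 0, 0) (y, 0, 0), hmix, h2] at h
  rw [innerCurvature, hu, hyu]
  norm_num [eps] at h ⊢
  linarith

theorem eq_innerCurvature_sub_lg_Sstar (hR : IsCurvatureLike_s13 R)
    (h1 : ∀ (x y v : W) (α : Fin 2),
      R ((x, 0, 0) : W × ℝ × ℝ) (xiv α) ((y, 0, 0) : W × ℝ × ℝ) ((v, 0, 0) : W × ℝ × ℝ) = 0)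
    (h2 : ∀ (x y : W) (α β : Fin 2),
      R (xiv α) ((x, 0, 0) : W × ℝ × ℝ) (xiv β) ((y, 0, 0) : W × ℝ × ℝ) =
        eps α * eps β * ⟪x, y⟫)
    (h3 : ∀ (x : W) (α β γ : Fin 2), R (xiv α) ((x, 0, 0) : W × ℝ × ℝ) (xiv β) (xiv γ) = 0)
    (h4 : R (xiv 0) (xiv 1) (xiv 0) (xiv 1) = 0)
    (hW : ∀ x y v z : W,
      R (x, 0, 0) (y, 0, 0) (v, 0, 0) (z, 0, 0) = innerCurvature x y v z)
    (x y v z : W × ℝ × ℝ) :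
    R x y v z = innerCurvature x.1 y.1 v.1 z.1 - lg (Sstar x y v) z := by
  have one₁ : ∀ (x y v : W) (α : Fin 2), R (xiv α) (x, 0, 0) (y, 0, 0) (v, 0, 0) = 0 :=
    fun x y v α => by rw [hR.antisymm, h1, neg_zero]
  have one₃ : ∀ (x y v : W) (α : Fin 2), R (x, 0, 0) (y, 0, 0) (xiv α) (v, 0, 0) = 0 :=
    fun x y v α => by rw [← hR.pair_comm, one₁]
  have one₄ : ∀ (x y v : W) (α : Fin 2), R (x, 0, 0) (y, 0, 0) (v, 0, 0) (xiv α) = 0 :=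
    fun x y v α => by rw [hR.antisymm', one₃, neg_zero]
  have two₁₄ : ∀ (x y : W) (α β : Fin 2),
      R (xiv α) (x, 0, 0) (y, 0, 0) (xiv β) = -(eps α * eps β * ⟪x, y⟫) :=
    fun x y α β => by rw [hR.antisymm', h2]
  have two₂₃ : ∀ (x y : W) (α β : Fin 2),
      R (x, 0, 0) (xiv α) (xiv β) (y, 0, 0) = -(eps α * eps β * ⟪x, y⟫) :=
    fun x y α β => by rw [hR.antisymm, h2]
  have two₂₄ : ∀ (x y : W) (α β : Fin 2),
      R (x, 0, 0) (xiv α) (y, 0, 0) (xiv β) = eps α * eps β * ⟪x, y⟫ :=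
    fun x y α β => by rw [hR.antisymm', two₂₃, neg_neg]
  have two₃₄ : ∀ (x y : W) (α β : Fin 2), R (x, 0, 0) (y, 0, 0) (xiv α) (xiv β) = 0 :=
    fun x y α β => by
      linear_combination hR.bianchi (x, 0, 0) (y, 0, 0) (xiv α) (xiv β) - two₂₃ x y α β
        - two₂₄ x y β α
  have two₁₂ : ∀ (x y : W) (α β : Fin 2), R (xiv α) (xiv β) (x, 0, 0) (y, 0, 0) = 0 :=
    fun x y α β => by rw [← hR.pair_comm, two₃₄]
  have three₂₃₄ : ∀ (x : W) (α β γ : Fin 2), R (x, 0, 0) (xiv α) (xiv β) (xiv γ) = 0 :=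
    fun x α β γ => by rw [hR.antisymm, h3, neg_zero]
  have three₁₂₃ : ∀ (x : W) (α β γ : Fin 2), R (xiv α) (xiv β) (xiv γ) (x, 0, 0) = 0 :=
    fun x α β γ => by rw [← hR.pair_comm, h3]
  have three₁₂₄ : ∀ (x : W) (α β γ : Fin 2), R (xiv α) (xiv β) (x, 0, 0) (xiv γ) = 0 :=
    fun x α β γ => by rw [hR.antisymm', three₁₂₃, neg_zero]
  have four := hR.apply_fin_two_eq_zero xiv h4
  rw [lg_Sstar]
  conv_lhs => rw [eq_inl_add_smul_xiv x, eq_inl_add_smul_xiv y, eq_inl_add_smul_xiv v,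
    eq_inl_add_smul_xiv z]
  simp only [hR.map_add₁, hR.map_add₂, hR.map_add₃, hR.map_add₄, hR.map_smul₁, hR.map_smul₂,
    hR.map_smul₃, hR.map_smul₄, hW, h1, one₁, one₃, one₄, h2, two₁₄, two₂₃, two₂₄, two₃₄,
    two₁₂, h3, three₂₃₄, three₁₂₄, three₁₂₃, four]
  simp only [innerCurvature, eps, lg, etat, Matrix.cons_val_zero, Matrix.cons_val_one]
  ring

end Components

theorem curvature_like_eq_Sund_sub_Sstar_general
    (φ : (W × ℝ × ℝ) →ₗ[ℝ] (W × ℝ × ℝ))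
    (hφ2 : ∀ v : W × ℝ × ℝ, φ (φ v) = (-v.1, 0, 0))
    (hφg : ∀ a b : W × ℝ × ℝ, lg (φ a) (φ b) = ⟪a.1, b.1⟫)
    (F : (W × ℝ × ℝ) →ₗ[ℝ] (W × ℝ × ℝ) →ₗ[ℝ] (W × ℝ × ℝ) →ₗ[ℝ] (W × ℝ × ℝ) →ₗ[ℝ] ℝ)
    (halt : ∀ x y v z, F y x v z = -F x y v z)
    (hpair : ∀ x y v z, F v z x y = F x y v z)
    (hbianchi : ∀ x y v z, F x y v z + F x v z y + F x z y v = 0)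
    (h1 : ∀ (x y v : W) (α : Fin 2),
      F ((x, 0, 0) : W × ℝ × ℝ) (xiv α) ((y, 0, 0) : W × ℝ × ℝ)
        ((v, 0, 0) : W × ℝ × ℝ) = 0)
    (h2 : ∀ (x y : W) (α β : Fin 2),
      F (xiv α) ((x, 0, 0) : W × ℝ × ℝ) (xiv β) ((y, 0, 0) : W × ℝ × ℝ) =
        eps α * eps β * ⟪x, y⟫)
    (h3 : ∀ (x : W) (α β γ : Fin 2),
      F (xiv α) ((x, 0, 0) : W × ℝ × ℝ) (xiv β) (xiv γ) = 0)
    (h4 : F (xiv 0) (xiv 1) (xiv 0) (xiv 1) = 0)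
    (hdeg : ∀ x₁ : W, ⟪x₁, x₁⟫ = 1 → ∀ y : W, ⟪y, x₁⟫ = 0 →
      F ((x₁, 1, 0) : W × ℝ × ℝ) ((y, 0, 0) : W × ℝ × ℝ)
        ((x₁, 1, 0) : W × ℝ × ℝ) ((y, 0, 0) : W × ℝ × ℝ) = 0) :
    ∀ x y v z : W × ℝ × ℝ,
      F x y v z = lg (Sund φ x y v) z - lg (Sstar x y v) z := by
  have hF := isCurvatureLike_of_linearMap F halt hpair hbianchi
  intro x y v z
  rw [lg_Sund hφ2 hφg]
  exact eq_innerCurvature_sub_lg_Sstar hF h1 h2 h3 h4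
    (restrict_eq_innerCurvature hF h1 h2 hdeg) x y v z

/-- Lemma 5.6, a ⇒ b: Let `F` be a curvature-like map on a
`(2n+2)`-dimensional Lorentz g.f.f-vector space with `s = 2` and `ξ₁` timelike,
satisfying conditions (9): `F(x,ξ_α,y,v) = 0`, `F(ξ_α,x,ξ_β,y) = ε_α ε_β g(x,y)`,
`F(ξ_α,x,ξ_β,ξ_γ) = 0` and `F(ξ₁,ξ₂,ξ₁,ξ₂) = 0` for `x,y,v ∈ Im φ`.  If
`F(u,y,u,y) = 0` for every `u = ξ₁ + x₁` with `x₁ ∈ Im φ` unit and every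
`y ∈ u^⊥ ∩ Im φ`, then `F(x,y,v,z) = g(S_*(x,y)v, z) - g(S*(x,y)v, z)` for all
`x,y,v,z`. -/
theorem curvature_like_eq_Sund_sub_Sstar [FiniteDimensional ℝ W]
    (n : ℕ) (hdim : Module.finrank ℝ W = 2 * n)
    (φ : (W × ℝ × ℝ) →ₗ[ℝ] (W × ℝ × ℝ))
    (hφIm : ∀ v : W × ℝ × ℝ, (φ v).2 = (0, 0))
    (hφ2 : ∀ v : W × ℝ × ℝ, φ (φ v) = (-v.1, 0, 0))
    (hφg : ∀ a b : W × ℝ × ℝ, lg (φ a) (φ b) = ⟪a.1, b.1⟫)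
    (F : (W × ℝ × ℝ) →ₗ[ℝ] (W × ℝ × ℝ) →ₗ[ℝ] (W × ℝ × ℝ) →ₗ[ℝ] (W × ℝ × ℝ) →ₗ[ℝ] ℝ)
    (halt : ∀ x y v z, F y x v z = -F x y v z)
    (hpair : ∀ x y v z, F v z x y = F x y v z)
    (hbianchi : ∀ x y v z, F x y v z + F x v z y + F x z y v = 0)
    (h1 : ∀ (x y v : W) (α : Fin 2),
      F ((x, 0, 0) : W × ℝ × ℝ) (xiv α) ((y, 0, 0) : W × ℝ × ℝ)
        ((v, 0, 0) : W × ℝ × ℝ) = 0)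
    (h2 : ∀ (x y : W) (α β : Fin 2),
      F (xiv α) ((x, 0, 0) : W × ℝ × ℝ) (xiv β) ((y, 0, 0) : W × ℝ × ℝ) =
        eps α * eps β * ⟪x, y⟫)
    (h3 : ∀ (x : W) (α β γ : Fin 2),
      F (xiv α) ((x, 0, 0) : W × ℝ × ℝ) (xiv β) (xiv γ) = 0)
    (h4 : F (xiv 0) (xiv 1) (xiv 0) (xiv 1) = 0)
    (hdeg : ∀ x₁ : W, ⟪x₁, x₁⟫ = 1 → ∀ y : W, ⟪y, x₁⟫ = 0 →
      F ((x₁, 1, 0) : W × ℝ × ℝ) ((y, 0, 0) : W × ℝ × ℝ)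
        ((x₁, 1, 0) : W × ℝ × ℝ) ((y, 0, 0) : W × ℝ × ℝ) = 0) :
    ∀ x y v z : W × ℝ × ℝ,
      F x y v z = lg (Sund φ x y v) z - lg (Sstar x y v) z :=
  curvature_like_eq_Sund_sub_Sstar_general φ hφ2 hφg F halt hpair hbianchi h1 h2 h3 h4 hdeg
end
end

section
/- Conversely, the map F(x,y,v,z) := g(S_*(x,y)v, z) - g(S*(x,y)v, z) is curvature-like and vanishes on every degenerate 2-plane span{u,y} with u = ξ_1 + x₁ (x₁ ∈ Im φ unit) and y ∈ u^⊥ ∩ Im φ. -/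
open RealInnerProductSpace

noncomputable section

variable {W : Type*} [NormedAddCommGroup W] [InnerProductSpace ℝ W]

/-- `F(x,y,v,z) := g(S_*(x,y)v, z) - g(S*(x,y)v, z)`. -/
def Fd (φ : (W × ℝ × ℝ) →ₗ[ℝ] (W × ℝ × ℝ)) (x y v z : W × ℝ × ℝ) : ℝ :=
  lg (Sund φ x y v) z - lg (Sstar x y v) z

lemma Fd_eq (φ : (W × ℝ × ℝ) →ₗ[ℝ] (W × ℝ × ℝ))
    (hφ2 : ∀ v : W × ℝ × ℝ, φ (φ v) = (-v.1, 0, 0))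
    (hφg : ∀ a b : W × ℝ × ℝ, lg (φ a) (φ b) = ⟪a.1, b.1⟫)
    (x y v z : W × ℝ × ℝ) :
    Fd φ x y v z =
      ⟪y.1, v.1⟫ * ⟪x.1, z.1⟫ - ⟪x.1, v.1⟫ * ⟪y.1, z.1⟫
      - ((-y.2.1 + y.2.2) * (-v.2.1 + v.2.2) * (⟪x.1, z.1⟫ - x.2.1 * z.2.1 + x.2.2 * z.2.2)
        - (-x.2.1 + x.2.2) * (-v.2.1 + v.2.2) * (⟪y.1, z.1⟫ - y.2.1 * z.2.1 + y.2.2 * z.2.2)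
        + (⟪y.1, v.1⟫ - y.2.1 * v.2.1 + y.2.2 * v.2.2) * (-x.2.1 + x.2.2) * (-z.2.1 + z.2.2)
        - (⟪x.1, v.1⟫ - x.2.1 * v.2.1 + x.2.2 * v.2.2) * (-y.2.1 + y.2.2) * (-z.2.1 + z.2.2)) := by
  simp only [Fd, Sund, hφ2, hφg]
  simp only [lg, Sstar, etat, xit, Prod.smul_fst, Prod.smul_snd, Prod.fst_add, Prod.snd_add,
    Prod.fst_sub, Prod.snd_sub, Prod.fst_neg, Prod.snd_neg, Prod.fst, Prod.snd,
    inner_add_left, inner_sub_left, inner_neg_left, real_inner_smul_left, inner_zero_left,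
    smul_eq_mul, neg_smul, neg_neg, inner_zero_right]
  ring

/-- Lemma 5.6, b ⇒ a: The map
`F(x,y,v,z) := g(S_*(x,y)v, z) - g(S*(x,y)v, z)` is curvature-like (antisymmetric in the
first two arguments, symmetric under pair exchange, and satisfying the first Bianchi
identity), and it vanishes on every degenerate 2-plane `span{u,y}` with `u = ξ₁ + x₁`
(`x₁ ∈ Im φ` unit) and `y ∈ u^⊥ ∩ Im φ`. -/
theorem Fd_curvature_like_and_vanishes
    (φ : (W × ℝ × ℝ) →ₗ[ℝ] (W × ℝ × ℝ))
    (hφIm : ∀ v : W × ℝ × ℝ, (φ v).2 = (0, 0))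
    (hφ2 : ∀ v : W × ℝ × ℝ, φ (φ v) = (-v.1, 0, 0))
    (hφg : ∀ a b : W × ℝ × ℝ, lg (φ a) (φ b) = ⟪a.1, b.1⟫) :
    (∀ x y v z : W × ℝ × ℝ, Fd φ y x v z = -Fd φ x y v z) ∧
    (∀ x y v z : W × ℝ × ℝ, Fd φ v z x y = Fd φ x y v z) ∧
    (∀ x y v z : W × ℝ × ℝ, Fd φ x y v z + Fd φ x v z y + Fd φ x z y v = 0) ∧
    (∀ x₁ : W, ⟪x₁, x₁⟫ = 1 → ∀ y : W, ⟪y, x₁⟫ = 0 →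
      Fd φ ((x₁, 1, 0) : W × ℝ × ℝ) ((y, 0, 0) : W × ℝ × ℝ)
        ((x₁, 1, 0) : W × ℝ × ℝ) ((y, 0, 0) : W × ℝ × ℝ) = 0) := by
  refine ⟨fun x y v z => ?_, fun x y v z => ?_, fun x y v z => ?_, fun x₁ h1 y h2 => ?_⟩
  · simp only [Fd_eq φ hφ2 hφg]; ring
  · simp only [Fd_eq φ hφ2 hφg]
    simp only [real_inner_comm z.1 x.1, real_inner_comm v.1 x.1, real_inner_comm z.1 y.1,
      real_inner_comm v.1 y.1, real_inner_comm z.1 v.1]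
    ring
  · simp only [Fd_eq φ hφ2 hφg]
    simp only [real_inner_comm y.1 x.1, real_inner_comm v.1 x.1, real_inner_comm z.1 x.1,
      real_inner_comm v.1 y.1, real_inner_comm z.1 y.1, real_inner_comm z.1 v.1]
    ring
  · have h2' : ⟪x₁, y⟫ = 0 := by rw [real_inner_comm]; exact h2
    simp only [Fd_eq φ hφ2 hφg]
    simp only [h1, h2, h2']
    ring
end
end

section
/- Let R be a curvature tensor on V = Im φ ⊕ span{ξ_1,ξ_2} given by R(x,y)v = S*(x,y)v − S_*(x,y)v + c₂ R⁰(x,y)v + ((c₁−c₂)/3) R^J(x,y)v, where R⁰(x,y)v = g(πy,πv)πx − g(πx,πv)πy with π the orthogonal projection onto Im φ, and R^J uses an almost Hermitian J on Im φ. Then for every u = ξ_1 + x₁ ∈ N_φ(ξ_1) (x₁ ∈ Im φ unit): R(Jx₁, u)u has component c₁·Jx₁ modulo span{u}, and for y₂ ∈ Im φ orthogonal to x₁ and Jx₁, R(y₂,u)u has component c₂·y₂ modulo span{u}; i.e. the induced Jacobi operator on u^⊥/span{u} restricted to Im φ-directions has eigenvalues c₁ (multiplicity 1) and c₂ (multiplicity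 2n−2), independent of u. -/
open RealInnerProductSpace

noncomputable section

variable {W : Type*} [NormedAddCommGroup W] [InnerProductSpace ℝ W]

/-- `R⁰(x,y)v = g(πy,πv)πx - g(πx,πv)πy`, with `π` the orthogonal projection onto
`Im φ = W`. -/
def R0 (x y v : W × ℝ × ℝ) : W × ℝ × ℝ :=
  ⟪y.1, v.1⟫ • ((x.1, 0, 0) : W × ℝ × ℝ) - ⟪x.1, v.1⟫ • ((y.1, 0, 0) : W × ℝ × ℝ)

/-- `R^J(x,y)v = g(Jπy,πv)Jπx - g(Jπx,πv)Jπy + 2g(πx,Jπy)Jπv`, with `J` an almost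
Hermitian structure on `Im φ = W`. -/
def RJ3 (J : W →ₗ[ℝ] W) (x y v : W × ℝ × ℝ) : W × ℝ × ℝ :=
  ⟪J y.1, v.1⟫ • ((J x.1, 0, 0) : W × ℝ × ℝ)
    - ⟪J x.1, v.1⟫ • ((J y.1, 0, 0) : W × ℝ × ℝ)
    + (2 * ⟪x.1, J y.1⟫) • ((J v.1, 0, 0) : W × ℝ × ℝ)

/-- The curvature tensor of Theorem 5.7:
`R(x,y)v = S*(x,y)v - S_*(x,y)v + c₂ R⁰(x,y)v + ((c₁-c₂)/3) R^J(x,y)v`. -/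
def Rfull (φ : (W × ℝ × ℝ) →ₗ[ℝ] (W × ℝ × ℝ)) (J : W →ₗ[ℝ] W) (c₁ c₂ : ℝ)
    (x y v : W × ℝ × ℝ) : W × ℝ × ℝ :=
  Sstar x y v - Sund φ x y v + c₂ • R0 x y v + ((c₁ - c₂) / 3) • RJ3 J x y v

/-- Let `R` be the curvature tensor
`R(x,y)v = S*(x,y)v - S_*(x,y)v + c₂ R⁰(x,y)v + ((c₁-c₂)/3) R^J(x,y)v` on
`V = Im φ ⊕ span{ξ₁,ξ₂}` with `dim Im φ = 2n`, `n > 1`.  Then for every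
`u = ξ₁ + x₁ ∈ N_φ(ξ₁)` (`x₁ ∈ Im φ` unit):  `R(Jx₁,u)u` has component `c₁ · Jx₁`
modulo `span{u}`, and for `y₂ ∈ Im φ` orthogonal to `x₁` and `Jx₁`, `R(y₂,u)u` has
component `c₂ · y₂` modulo `span{u}`; i.e. the induced Jacobi operator on
`u^⊥/span{u}` restricted to `Im φ`-directions has eigenvalue `c₁` on `Jx₁` and `c₂` on
the `(2n-2)`-dimensional complement, independently of `u`. -/
theorem Rfull_jacobi_eigenvalues [FiniteDimensional ℝ W]
    (n : ℕ) (hn : 1 < n) (hdim : Module.finrank ℝ W = 2 * n)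
    (J : W →ₗ[ℝ] W)
    (hJ2 : ∀ x : W, J (J x) = -x)
    (hJg : ∀ x y : W, ⟪J x, J y⟫ = ⟪x, y⟫)
    (φ : (W × ℝ × ℝ) →ₗ[ℝ] (W × ℝ × ℝ))
    (hφIm : ∀ v : W × ℝ × ℝ, (φ v).2 = (0, 0))
    (hφ2 : ∀ v : W × ℝ × ℝ, φ (φ v) = (-v.1, 0, 0))
    (hφg : ∀ a b : W × ℝ × ℝ, lg (φ a) (φ b) = ⟪a.1, b.1⟫)
    (c₁ c₂ : ℝ) :
    ∀ x₁ : W, ⟪x₁, x₁⟫ = 1 →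
      (Rfull φ J c₁ c₂ ((J x₁, 0, 0) : W × ℝ × ℝ) ((x₁, 1, 0) : W × ℝ × ℝ)
          ((x₁, 1, 0) : W × ℝ × ℝ) - c₁ • ((J x₁, 0, 0) : W × ℝ × ℝ) ∈
        Submodule.span ℝ ({((x₁, 1, 0) : W × ℝ × ℝ)} : Set (W × ℝ × ℝ))) ∧
      (∀ y₂ : W, ⟪y₂, x₁⟫ = 0 → ⟪y₂, J x₁⟫ = 0 →
        Rfull φ J c₁ c₂ ((y₂, 0, 0) : W × ℝ × ℝ) ((x₁, 1, 0) : W × ℝ × ℝ)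
            ((x₁, 1, 0) : W × ℝ × ℝ) - c₂ • ((y₂, 0, 0) : W × ℝ × ℝ) ∈
          Submodule.span ℝ ({((x₁, 1, 0) : W × ℝ × ℝ)} : Set (W × ℝ × ℝ))) := by

  intro x₁ hx₁
  have hJsym : ∀ a b : W, ⟪J a, b⟫ = -⟪a, J b⟫ := by
    intro a b
    rw [← hJg (J a) b, hJ2, inner_neg_left]
  have h0 : ⟪J x₁, x₁⟫ = 0 := by
    have := hJsym x₁ x₁
    have h2 := real_inner_comm (J x₁) x₁
    linarith [hJsym x₁ x₁, real_inner_comm (J x₁) x₁]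
  have h0' : ⟪x₁, J x₁⟫ = 0 := by rw [real_inner_comm]; exact h0
  have key : ∀ x : W, ⟪x, x₁⟫ = 0 →
      Rfull φ J c₁ c₂ ((x, 0, 0) : W × ℝ × ℝ) ((x₁, 1, 0) : W × ℝ × ℝ)
        ((x₁, 1, 0) : W × ℝ × ℝ)
      = c₂ • ((x, 0, 0) : W × ℝ × ℝ)
          + ((c₁ - c₂) * ⟪x, J x₁⟫) • ((J x₁, 0, 0) : W × ℝ × ℝ) := by
    intro x hx
    have hJx : ⟪J x, x₁⟫ = -⟪x, J x₁⟫ := hJsym x x₁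
    simp only [Rfull, Sstar, Sund, R0, RJ3, hφg, hφ2]
    simp only [etat, lg, xit]
    simp only [hx, hx₁, h0, h0', hJx, real_inner_comm x₁ x]
    ext <;> simp <;> module
  constructor
  · have hJJ : ⟪J x₁, J x₁⟫ = 1 := by rw [hJg]; exact hx₁
    rw [key (J x₁) h0, hJJ]
    have : c₂ • ((J x₁, 0, 0) : W × ℝ × ℝ) + ((c₁ - c₂) * 1) • ((J x₁, 0, 0) : W × ℝ × ℝ)
        - c₁ • ((J x₁, 0, 0) : W × ℝ × ℝ) = 0 := by module
    rw [this]
    exact Submodule.zero_mem _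
  · intro y₂ hy1 hy2
    rw [key y₂ hy1, hy2]
    have : c₂ • ((y₂, 0, 0) : W × ℝ × ℝ) + ((c₁ - c₂) * 0) • ((J x₁, 0, 0) : W × ℝ × ℝ)
        - c₂ • ((y₂, 0, 0) : W × ℝ × ℝ) = 0 := by module
    rw [this]
    exact Submodule.zero_mem _
end
end
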